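/- arXiv:1408.0494 — 6 statements merged into one kernel-verified Lean document; each statement's English description precedes it below -/
import Mathlib

section
/- For f, g ∈ H¹(ℝ), the inequality |∫ f² g| ≤ ‖f'‖₂^{1/2} ‖f‖₂^{3/2} ‖g‖₂ holds. -/
open MeasureTheory Real

/-!
Writing `f(x)²` as `∫_{-∞}^x (f²)'` and as `-∫_x^∞ (f²)'` gives `‖f‖_∞² ≤ ∫ |f f'| ≤ ‖f‖₂ ‖f'‖₂`,
hence `‖f‖₄⁴ ≤ ‖f‖_∞² ‖f‖₂² ≤ ‖f'‖₂ ‖f‖₂³`. Cauchy–Schwarz then bounds `|∫ f² g|` by `‖f‖₄² ‖g‖₂`.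
-/

open Set Filter

theorem integral_abs_mul_le_of_memLp_two {α : Type*} [MeasurableSpace α] {μ : Measure α}
    {u v : α → ℝ} (hu : MemLp u 2 μ) (hv : MemLp v 2 μ) :
    ∫ x, |u x * v x| ∂μ ≤
      (∫ x, u x ^ 2 ∂μ) ^ ((1 : ℝ) / 2) * (∫ x, v x ^ 2 ∂μ) ^ ((1 : ℝ) / 2) := by
  have two : ENNReal.ofReal 2 = 2 := by norm_num
  have holder := integral_mul_norm_le_Lp_mul_Lq Real.HolderConjugate.two_two
    (two ▸ hu) (two ▸ hv)
  simpa only [Real.norm_eq_abs, abs_mul, Real.rpow_two, sq_abs] using holder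

section GagliardoNirenberg

variable {f f' : ℝ → ℝ}

theorem aestronglyMeasurable_of_hasDerivAt (hf : ∀ x, HasDerivAt f (f' x) x) :
    AEStronglyMeasurable f' := by
  rw [show f' = deriv f from funext fun x => (hf x).deriv.symm]
  exact (measurable_deriv f).aestronglyMeasurable

theorem sq_le_integral_abs_mul_of_hasDerivAt (hf : ∀ x, HasDerivAt f (f' x) x)
    (hf2 : Integrable (fun x => f x ^ 2)) (hff' : Integrable (fun x => f x * f' x)) (x : ℝ) :
    f x ^ 2 ≤ ∫ t, |f t * f' t| := by
  have hderiv : ∀ t, HasDerivAt (fun t => f t ^ 2 / 2) (f t * f' t) t := fun t => by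
    simpa [mul_comm, mul_div_assoc] using ((hf t).fun_pow 2).div_const 2
  have hint : Integrable (fun t => f t ^ 2 / 2) := hf2.div_const 2
  have left : ∫ t in Iic x, f t * f' t = f x ^ 2 / 2 := by
    simpa using integral_Iic_of_hasDerivAt_of_tendsto' (fun t _ => hderiv t) hff'.integrableOn
      (tendsto_zero_of_hasDerivAt_of_integrableOn_Iic (a := 0) (fun t _ => hderiv t)
        hff'.integrableOn hint.integrableOn)
  have right : ∫ t in Ioi x, f t * f' t = -(f x ^ 2 / 2) := by
    simpa using integral_Ioi_of_hasDerivAt_of_tendsto' (fun t _ => hderiv t) hff'.integrableOn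
      (tendsto_zero_of_hasDerivAt_of_integrableOn_Ioi (a := 0) (fun t _ => hderiv t)
        hff'.integrableOn hint.integrableOn)
  calc f x ^ 2 = (∫ t in Iic x, f t * f' t) + -∫ t in Ioi x, f t * f' t := by
        rw [left, right]; ring
    _ ≤ (∫ t in Iic x, |f t * f' t|) + ∫ t in Ioi x, |f t * f' t| :=
        add_le_add ((le_abs_self _).trans abs_integral_le_integral_abs)
          ((neg_le_abs _).trans abs_integral_le_integral_abs)
    _ = ∫ t, |f t * f' t| :=
        intervalIntegral.integral_Iic_add_Ioi hff'.abs.integrableOn hff'.abs.integrableOn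

theorem memLp_two_of_hasDerivAt (hf : ∀ x, HasDerivAt f (f' x) x)
    (hf2 : Integrable (fun x => f x ^ 2)) : MemLp f 2 :=
  (memLp_two_iff_integrable_sq
    (continuous_iff_continuousAt.2 fun x => (hf x).continuousAt).aestronglyMeasurable).2 hf2

theorem memLp_two_deriv_of_hasDerivAt (hf : ∀ x, HasDerivAt f (f' x) x)
    (hf'2 : Integrable (fun x => f' x ^ 2)) : MemLp f' 2 :=
  (memLp_two_iff_integrable_sq (aestronglyMeasurable_of_hasDerivAt hf)).2 hf'2

theorem sq_le_rpow_integral_sq_mul_rpow_integral_deriv_sq (hf : ∀ x, HasDerivAt f (f' x) x)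
    (hf2 : Integrable (fun x => f x ^ 2)) (hf'2 : Integrable (fun x => f' x ^ 2)) (x : ℝ) :
    f x ^ 2 ≤ (∫ t, f t ^ 2) ^ ((1 : ℝ) / 2) * (∫ t, f' t ^ 2) ^ ((1 : ℝ) / 2) := by
  have hfL2 := memLp_two_of_hasDerivAt hf hf2
  have hf'L2 := memLp_two_deriv_of_hasDerivAt hf hf'2
  exact (sq_le_integral_abs_mul_of_hasDerivAt hf hf2 (hfL2.integrable_mul hf'L2) x).trans
    (integral_abs_mul_le_of_memLp_two hfL2 hf'L2)

theorem pow_four_le_mul_sq_of_hasDerivAt (hf : ∀ x, HasDerivAt f (f' x) x)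
    (hf2 : Integrable (fun x => f x ^ 2)) (hf'2 : Integrable (fun x => f' x ^ 2)) (x : ℝ) :
    f x ^ 4 ≤ ((∫ t, f t ^ 2) ^ ((1 : ℝ) / 2) * (∫ t, f' t ^ 2) ^ ((1 : ℝ) / 2)) * f x ^ 2 := by
  rw [show f x ^ 4 = f x ^ 2 * f x ^ 2 by ring]
  exact mul_le_mul_of_nonneg_right
    (sq_le_rpow_integral_sq_mul_rpow_integral_deriv_sq hf hf2 hf'2 x) (sq_nonneg _)

theorem memLp_two_sq_of_hasDerivAt (hf : ∀ x, HasDerivAt f (f' x) x)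
    (hf2 : Integrable (fun x => f x ^ 2)) (hf'2 : Integrable (fun x => f' x ^ 2)) :
    MemLp (fun x => f x ^ 2) 2 := by
  have hmeas : AEStronglyMeasurable (fun x => f x ^ 2) :=
    (memLp_two_of_hasDerivAt hf hf2).aestronglyMeasurable.pow 2
  refine (memLp_two_iff_integrable_sq hmeas).2 <| (hf2.const_mul _).mono' (hmeas.pow 2) <|
    ae_of_all _ fun x =>
      ((Real.norm_of_nonneg (by positivity)).trans (pow_mul (f x) 2 2).symm).trans_le
        (pow_four_le_mul_sq_of_hasDerivAt hf hf2 hf'2 x)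

theorem integral_pow_four_le_of_hasDerivAt (hf : ∀ x, HasDerivAt f (f' x) x)
    (hf2 : Integrable (fun x => f x ^ 2)) (hf'2 : Integrable (fun x => f' x ^ 2)) :
    ∫ x, f x ^ 4 ≤ (∫ x, f' x ^ 2) ^ ((1 : ℝ) / 2) * (∫ x, f x ^ 2) ^ ((3 : ℝ) / 2) := by
  set A := ∫ x, f' x ^ 2
  set B := ∫ x, f x ^ 2
  have hB : 0 ≤ B := integral_nonneg fun x => sq_nonneg _
  calc ∫ x, f x ^ 4 ≤ ∫ x, (B ^ ((1 : ℝ) / 2) * A ^ ((1 : ℝ) / 2)) * f x ^ 2 :=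
        integral_mono_of_nonneg (Eventually.of_forall fun x => by positivity) (hf2.const_mul _)
          (Eventually.of_forall (pow_four_le_mul_sq_of_hasDerivAt hf hf2 hf'2))
    _ = A ^ ((1 : ℝ) / 2) * (B ^ ((1 : ℝ) / 2) * B ^ (1 : ℝ)) := by
        rw [integral_const_mul, Real.rpow_one]; ring
    _ = A ^ ((1 : ℝ) / 2) * B ^ ((3 : ℝ) / 2) := by
        rw [← Real.rpow_add' hB (by norm_num)]; norm_num

end GagliardoNirenberg

theorem stmt2_general (f f' g g' : ℝ → ℝ)
    (hf : ∀ x, HasDerivAt f (f' x) x)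
    (hg : ∀ x, HasDerivAt g (g' x) x)
    (hf2 : Integrable (fun x => (f x) ^ 2))
    (hf'2 : Integrable (fun x => (f' x) ^ 2))
    (hg2 : Integrable (fun x => (g x) ^ 2)) :
    |∫ x, (f x) ^ 2 * g x| ≤
      (∫ x, (f' x) ^ 2) ^ ((1 : ℝ) / 4) * (∫ x, (f x) ^ 2) ^ ((3 : ℝ) / 4)
        * (∫ x, (g x) ^ 2) ^ ((1 : ℝ) / 2) := by
  have hA : 0 ≤ ∫ x, f' x ^ 2 := integral_nonneg fun x => sq_nonneg _
  have hB : 0 ≤ ∫ x, f x ^ 2 := integral_nonneg fun x => sq_nonneg _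
  calc |∫ x, f x ^ 2 * g x| ≤ ∫ x, |f x ^ 2 * g x| := abs_integral_le_integral_abs
    _ ≤ (∫ x, (f x ^ 2) ^ 2) ^ ((1 : ℝ) / 2) * (∫ x, g x ^ 2) ^ ((1 : ℝ) / 2) :=
        integral_abs_mul_le_of_memLp_two (memLp_two_sq_of_hasDerivAt hf hf2 hf'2)
          (memLp_two_of_hasDerivAt hg hg2)
    _ ≤ ((∫ x, f' x ^ 2) ^ ((1 : ℝ) / 2) * (∫ x, f x ^ 2) ^ ((3 : ℝ) / 2)) ^ ((1 : ℝ) / 2)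
          * (∫ x, g x ^ 2) ^ ((1 : ℝ) / 2) := by
        gcongr
        simpa only [← pow_mul] using integral_pow_four_le_of_hasDerivAt hf hf2 hf'2
    _ = (∫ x, f' x ^ 2) ^ ((1 : ℝ) / 4) * (∫ x, f x ^ 2) ^ ((3 : ℝ) / 4)
          * (∫ x, g x ^ 2) ^ ((1 : ℝ) / 2) := by
        rw [Real.mul_rpow (by positivity) (by positivity), ← Real.rpow_mul hA, ← Real.rpow_mul hB]
        norm_num

/-- For `f, g ∈ H¹(ℝ)`: `|∫ f² g| ≤ ‖f'‖₂^(1/2) ‖f‖₂^(3/2) ‖g‖₂`, i.e.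
`|∫ f² g| ≤ (∫ f'²)^(1/4) (∫ f²)^(3/4) (∫ g²)^(1/2)`. -/
theorem stmt2 (f f' g g' : ℝ → ℝ)
    (hf : ∀ x, HasDerivAt f (f' x) x)
    (hg : ∀ x, HasDerivAt g (g' x) x)
    (hf2 : Integrable (fun x => (f x) ^ 2))
    (hf'2 : Integrable (fun x => (f' x) ^ 2))
    (hg2 : Integrable (fun x => (g x) ^ 2))
    (hg'2 : Integrable (fun x => (g' x) ^ 2))
    (hfg : Integrable (fun x => (f x) ^ 2 * g x)) :
    |∫ x, (f x) ^ 2 * g x| ≤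
      (∫ x, (f' x) ^ 2) ^ ((1 : ℝ) / 4) * (∫ x, (f x) ^ 2) ^ ((3 : ℝ) / 4)
        * (∫ x, (g x) ^ 2) ^ ((1 : ℝ) / 2) :=
  stmt2_general f f' g g' hf hg hf2 hf'2 hg2
end

section
/- Let a, c < 0. For every μ > 0, the infimum m(μ) of τ(f,g) = -a∫(f')² - c∫(g')² + ∫f²g + 2∫fg over pairs (f,g) ∈ H¹(ℝ)×H¹(ℝ) with ‖f‖₂² + ‖g‖₂² = μ satisfies m(μ) < -C μ^{5/3} / (|a|+|c|)^{1/3} for some positive constant C independent of a, c, μ. -/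
/-!
The energy is bounded below on the constraint set (otherwise `sInf` would be the junk value `0`):
in one dimension `f(x)² ≤ ‖f‖₂² + ‖f'‖₂²`, and with AM-GM this controls the cubic term `∫ f² g`
by the kinetic term `-a ∫ f'²` and the mass. It therefore suffices to exhibit one admissible
pair of small energy. Take `(φ, -φ)` with `φ = b exp(-l x²)`; the mass constraint fixes `l` in
terms of `b`, after which the kinetic part is `≲ (|a| + |c|) b⁴ / μ` while the cubic part is
`≈ -b μ`. Choosing `b ≍ (μ² / (|a| + |c|))^(1/3)` balances the two and gives energy
`≲ -μ^(5/3) / (|a| + |c|)^(1/3)`.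
-/

open MeasureTheory Real

theorem sq_le_integral_sq_add_integral_deriv_sq {f f' : ℝ → ℝ}
    (hd : ∀ x, HasDerivAt f (f' x) x) (hf : Integrable fun x => f x ^ 2)
    (hf' : Integrable fun x => f' x ^ 2) (x : ℝ) :
    f x ^ 2 ≤ (∫ y, f y ^ 2) + ∫ y, f' y ^ 2 := by
  have hd2 : ∀ y, HasDerivAt (fun y => f y ^ 2) (2 * f y * f' y) y := fun y => by
    simpa using (hd y).fun_pow 2
  have hbound : ∀ y, |2 * f y * f' y| ≤ f y ^ 2 + f' y ^ 2 := fun y => by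
    rw [abs_le]; constructor <;> nlinarith [sq_nonneg (f y + f' y), sq_nonneg (f y - f' y)]
  have hmeas : AEStronglyMeasurable (fun y => 2 * f y * f' y) := by
    have hf'eq : f' = deriv f := funext fun y => (hd y).deriv.symm
    have hfc : Continuous f := continuous_iff_continuousAt.2 fun y => (hd y).continuousAt
    rw [hf'eq]
    exact (continuous_const.mul hfc).aestronglyMeasurable.mul
      (measurable_deriv f).aestronglyMeasurable
  have hint : Integrable fun y => 2 * f y * f' y :=
    (hf.add hf').mono' hmeas (.of_forall hbound)
  have hlim : Filter.Tendsto (fun y => f y ^ 2) Filter.atBot (nhds 0) :=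
    tendsto_zero_of_hasDerivAt_of_integrableOn_Iic (a := x) (fun y _ => hd2 y)
      hint.integrableOn hf.integrableOn
  calc f x ^ 2 = ∫ y in Set.Iic x, 2 * f y * f' y := by
        rw [integral_Iic_of_hasDerivAt_of_tendsto' (fun y _ => hd2 y) hint.integrableOn hlim,
          sub_zero]
    _ ≤ ∫ y in Set.Iic x, (f y ^ 2 + f' y ^ 2) :=
        setIntegral_mono hint.integrableOn (hf.add hf').integrableOn
          fun y => (le_abs_self _).trans (hbound y)
    _ ≤ ∫ y, (f y ^ 2 + f' y ^ 2) :=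
        setIntegral_le_integral (hf.add hf') (.of_forall fun y => by positivity)
    _ = (∫ y, f y ^ 2) + ∫ y, f' y ^ 2 := integral_add hf hf'

theorem neg_half_integral_sq_add_le_integral_mul {f g : ℝ → ℝ}
    (hf : Integrable fun x => f x ^ 2) (hg : Integrable fun x => g x ^ 2)
    (hfg : Integrable fun x => f x * g x) :
    -(((∫ x, f x ^ 2) + ∫ x, g x ^ 2) / 2) ≤ ∫ x, f x * g x := by
  rw [← integral_add hf hg, ← integral_div, ← integral_neg]
  exact integral_mono ((hf.add hg).div_const 2).neg hfg fun x => by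
    nlinarith [sq_nonneg (f x + g x)]

theorem integral_sq_mul_ge_of_sq_le {f g : ℝ → ℝ} {K ε : ℝ} (hε : 0 < ε)
    (hK : ∀ x, f x ^ 2 ≤ K) (hf : Integrable fun x => f x ^ 2)
    (hg : Integrable fun x => g x ^ 2) (hfg : Integrable fun x => f x ^ 2 * g x) :
    -(((ε * K * ∫ x, f x ^ 2) + (∫ x, g x ^ 2) / ε) / 2) ≤ ∫ x, f x ^ 2 * g x := by
  rw [← integral_const_mul, ← integral_div, ← integral_add (hf.const_mul _) (hg.div_const _),
    ← integral_div, ← integral_neg]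
  refine integral_mono (((hf.const_mul _).add (hg.div_const _)).div_const 2).neg hfg fun x => ?_
  -- `0 ≤ (ε f² + g)²` and `f⁴ ≤ K f²`
  have hf4 : f x ^ 2 * f x ^ 2 ≤ K * f x ^ 2 := mul_le_mul_of_nonneg_right (hK x) (sq_nonneg _)
  field_simp
  nlinarith [sq_nonneg (ε * f x ^ 2 + g x), mul_le_mul_of_nonneg_left hf4 (sq_nonneg ε)]

def energyLevels (a c μ : ℝ) : Set ℝ :=
  {t : ℝ | ∃ f f' g g' : ℝ → ℝ,
    (∀ x, HasDerivAt f (f' x) x) ∧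
    (∀ x, HasDerivAt g (g' x) x) ∧
    Integrable (fun x => (f x) ^ 2) ∧
    Integrable (fun x => (f' x) ^ 2) ∧
    Integrable (fun x => (g x) ^ 2) ∧
    Integrable (fun x => (g' x) ^ 2) ∧
    Integrable (fun x => (f x) ^ 2 * g x) ∧
    Integrable (fun x => f x * g x) ∧
    (∫ x, (f x) ^ 2) + (∫ x, (g x) ^ 2) = μ ∧
    t = -a * (∫ x, (f' x) ^ 2) - c * (∫ x, (g' x) ^ 2)
        + (∫ x, (f x) ^ 2 * g x) + 2 * (∫ x, f x * g x)}

theorem energyLevels_bddBelow {a c μ : ℝ} (ha : a < 0) (hc : c ≤ 0) (hμ : 0 < μ) :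
    BddBelow (energyLevels a c μ) := by
  refine ⟨a * μ + μ ^ 2 / (4 * a) - μ, ?_⟩
  rintro t ⟨f, f', g, g', hdf, -, hf, hf', hg, hg', hfg2, hfg, hmass, rfl⟩
  have hε : 0 < -2 * a / μ := div_pos (by linarith) hμ
  -- `ε = -2a/μ` makes the `∫ f'²` terms cancel
  have hP := integral_sq_mul_ge_of_sq_le hε
    (sq_le_integral_sq_add_integral_deriv_sq hdf hf hf') hf hg hfg2
  have hQ := neg_half_integral_sq_add_le_integral_mul hf hg hfg
  set K := (∫ x, f x ^ 2) + ∫ x, f' x ^ 2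
  have hf0 : 0 ≤ ∫ x, f x ^ 2 := integral_nonneg fun x => sq_nonneg _
  have hf'0 : 0 ≤ ∫ x, f' x ^ 2 := integral_nonneg fun x => sq_nonneg _
  have hg0 : 0 ≤ ∫ x, g x ^ 2 := integral_nonneg fun x => sq_nonneg _
  have hg'0 : 0 ≤ -c * ∫ x, g' x ^ 2 :=
    mul_nonneg (neg_nonneg.2 hc) (integral_nonneg fun x => sq_nonneg _)
  have h1 : -2 * a / μ * K * ∫ x, f x ^ 2 ≤ -2 * a * K := by
    calc _ ≤ -2 * a / μ * K * μ := by gcongr; linarith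
      _ = _ := by field_simp
  have h2 : (∫ x, g x ^ 2) / (-2 * a / μ) ≤ -(μ ^ 2 / (2 * a)) := by
    calc _ ≤ μ / (-2 * a / μ) := by gcongr; linarith
      _ = _ := by field_simp
  have h3 : μ ^ 2 / (4 * a) = μ ^ 2 / (2 * a) / 2 := by field_simp; ring
  have h4 : a * μ ≤ a * ∫ x, f x ^ 2 := mul_le_mul_of_nonpos_left (by linarith) ha.le
  have h5 : a * K = a * (∫ x, f x ^ 2) + a * ∫ x, f' x ^ 2 := mul_add _ _ _
  linarith

theorem mul_exp_neg_mul_sq_pow (b l x : ℝ) (n : ℕ) :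
    (b * exp (-(l * x ^ 2))) ^ n = b ^ n * exp (-(n * l) * x ^ 2) := by
  rw [mul_pow, ← exp_nat_mul]; ring_nf

theorem integrable_mul_exp_neg_mul_sq_pow {l : ℝ} (hl : 0 < l) (b : ℝ) {n : ℕ} (hn : n ≠ 0) :
    Integrable fun x => (b * exp (-(l * x ^ 2))) ^ n := by
  simp_rw [mul_exp_neg_mul_sq_pow]
  exact (integrable_exp_neg_mul_sq (by positivity)).const_mul _

theorem integral_mul_exp_neg_mul_sq_pow (b l : ℝ) (n : ℕ) :
    ∫ x, (b * exp (-(l * x ^ 2))) ^ n = b ^ n * √(π / (n * l)) := by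
  simp_rw [mul_exp_neg_mul_sq_pow, integral_const_mul, integral_gaussian]

theorem hasDerivAt_mul_exp_neg_mul_sq (b l x : ℝ) :
    HasDerivAt (fun x => b * exp (-(l * x ^ 2))) (-(2 * l * x) * (b * exp (-(l * x ^ 2)))) x :=
  (((hasDerivAt_pow 2 x).const_mul l).fun_neg.exp.const_mul b).congr_deriv (by ring)

theorem sq_deriv_mul_exp_neg_mul_sq_le {l : ℝ} (hl : 0 < l) (b x : ℝ) :
    (-(2 * l * x) * (b * exp (-(l * x ^ 2)))) ^ 2 ≤ 4 * l * b ^ 2 * exp (-l * x ^ 2) := by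
  have hu : l * x ^ 2 * exp (-(l * x ^ 2)) ≤ 1 := by
    rw [exp_neg, ← div_eq_mul_inv, div_le_one (exp_pos _)]
    linarith [add_one_le_exp (l * x ^ 2)]
  have he : 0 ≤ 4 * l * b ^ 2 * exp (-(l * x ^ 2)) := by positivity
  calc (-(2 * l * x) * (b * exp (-(l * x ^ 2)))) ^ 2
      = 4 * l * b ^ 2 * exp (-(l * x ^ 2)) * (l * x ^ 2 * exp (-(l * x ^ 2))) := by ring
    _ ≤ 4 * l * b ^ 2 * exp (-(l * x ^ 2)) * 1 := mul_le_mul_of_nonneg_left hu he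
    _ = 4 * l * b ^ 2 * exp (-l * x ^ 2) := by ring_nf

theorem exists_mem_energyLevels_le_gaussian (a c b : ℝ) {l : ℝ} (hl : 0 < l) :
    ∃ t ∈ energyLevels a c (2 * b ^ 2 * √(π / (2 * l))),
      t ≤ (|a| + |c|) * (4 * l * b ^ 2 * √(π / l)) - b ^ 3 * √(π / (3 * l))
        - 2 * (b ^ 2 * √(π / (2 * l))) := by
  set φ : ℝ → ℝ := fun x => b * exp (-(l * x ^ 2))
  set φ' : ℝ → ℝ := fun x => -(2 * l * x) * φ x
  have hφ : ∀ x, HasDerivAt φ (φ' x) x := hasDerivAt_mul_exp_neg_mul_sq b l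
  have hφ2 : Integrable fun x => φ x ^ 2 :=
    integrable_mul_exp_neg_mul_sq_pow hl b two_ne_zero
  have hφ3 : Integrable fun x => φ x ^ 3 :=
    integrable_mul_exp_neg_mul_sq_pow hl b three_ne_zero
  have hdom : Integrable fun x => 4 * l * b ^ 2 * exp (-l * x ^ 2) :=
    (integrable_exp_neg_mul_sq hl).const_mul _
  have hφ'2 : Integrable fun x => φ' x ^ 2 := by
    refine hdom.mono' (by fun_prop) (.of_forall fun x => ?_)
    rw [Real.norm_of_nonneg (sq_nonneg _)]
    exact sq_deriv_mul_exp_neg_mul_sq_le hl b x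
  have hkin : ∫ x, φ' x ^ 2 ≤ 4 * l * b ^ 2 * √(π / l) := by
    rw [← integral_gaussian, ← integral_const_mul]
    exact integral_mono hφ'2 hdom (sq_deriv_mul_exp_neg_mul_sq_le hl b)
  have hmass : ∫ x, φ x ^ 2 = b ^ 2 * √(π / (2 * l)) := by
    exact_mod_cast integral_mul_exp_neg_mul_sq_pow b l 2
  have hcube : ∫ x, φ x ^ 3 = b ^ 3 * √(π / (3 * l)) := by
    exact_mod_cast integral_mul_exp_neg_mul_sq_pow b l 3
  have hcube_eq : (fun x => φ x ^ 2 * -φ x) = fun x => -(φ x ^ 3) := by ext; ring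
  have hprod_eq : (fun x => φ x * -φ x) = fun x => -(φ x ^ 2) := by ext; ring
  refine ⟨_, ⟨φ, φ', fun x => -φ x, fun x => -φ' x, hφ, fun x => (hφ x).neg, hφ2, hφ'2,
    by simpa only [neg_sq] using hφ2, by simpa only [neg_sq] using hφ'2,
    by rw [hcube_eq]; exact hφ3.neg, by rw [hprod_eq]; exact hφ2.neg,
    by simp only [neg_sq, hmass]; ring, rfl⟩, ?_⟩
  simp only [neg_sq, hcube_eq, hprod_eq, integral_neg, hmass, hcube]
  have hkin0 : 0 ≤ ∫ x, φ' x ^ 2 := integral_nonneg fun x => sq_nonneg _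
  have habs := mul_le_mul_of_nonneg_right (add_le_add (neg_le_abs a) (neg_le_abs c)) hkin0
  have hK := mul_le_mul_of_nonneg_left hkin (add_nonneg (abs_nonneg a) (abs_nonneg c))
  linarith

theorem sInf_energyLevels_lt {a c μ b : ℝ} (ha : a < 0) (hc : c ≤ 0) (hμ : 0 < μ)
    (hb : 0 < b) :
    sInf (energyLevels a c μ) < 8 * π * (|a| + |c|) * b ^ 4 / μ - 2 / 5 * b * μ := by
  -- `s = √(π / 2l)` is the width for which the Gaussian pair has mass `2 b² s = μ`
  obtain ⟨s, hs, hμs⟩ : ∃ s, 0 < s ∧ 2 * b ^ 2 * s = μ :=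
    ⟨μ / (2 * b ^ 2), by positivity, by field_simp⟩
  obtain ⟨l, hl, hls⟩ : ∃ l, 0 < l ∧ 2 * l * s ^ 2 = π :=
    ⟨π / (2 * s ^ 2), by positivity, by field_simp⟩
  obtain ⟨t, ht, hle⟩ := exists_mem_energyLevels_le_gaussian a c b hl
  have hwidth : √(π / (2 * l)) = s := by
    rw [show π / (2 * l) = s ^ 2 by rw [← hls]; field_simp, sqrt_sq hs.le]
  have hkin : √(π / l) ≤ 2 * s := by
    rw [sqrt_le_left (by positivity), show π / l = 2 * s ^ 2 by rw [← hls]; field_simp]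
    nlinarith
  have hcube : 4 / 5 * s ≤ √(π / (3 * l)) := by
    rw [le_sqrt (by positivity) (by positivity),
      show π / (3 * l) = 2 / 3 * s ^ 2 by rw [← hls]; field_simp]
    nlinarith
  rw [hwidth, hμs] at ht
  rw [hwidth] at hle
  have e1 : (|a| + |c|) * (4 * l * b ^ 2 * (2 * s)) = 8 * π * (|a| + |c|) * b ^ 4 / μ := by
    rw [← hμs, ← hls]; field_simp; ring
  have e2 : b ^ 3 * (4 / 5 * s) = 2 / 5 * b * μ := by rw [← hμs]; ring
  calc sInf (energyLevels a c μ) ≤ t := csInf_le (energyLevels_bddBelow ha hc hμ) ht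
    _ ≤ (|a| + |c|) * (4 * l * b ^ 2 * (2 * s)) - b ^ 3 * (4 / 5 * s) - 2 * (b ^ 2 * s) :=
        hle.trans (by gcongr)
    _ < _ := by
        rw [e1, e2]
        have : 0 < 2 * (b ^ 2 * s) := by positivity
        linarith

theorem rpow_five_thirds_div_rpow_one_third {μ K : ℝ} (hμ : 0 < μ) (hK : 0 ≤ K) :
    μ ^ ((5 : ℝ) / 3) / K ^ ((1 : ℝ) / 3) = μ * (μ ^ 2 / K) ^ ((1 : ℝ) / 3) := by
  rw [div_rpow (sq_nonneg μ) hK, ← rpow_natCast, ← rpow_mul hμ.le, ← mul_div_assoc,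
    ← rpow_one_add' hμ.le (by norm_num)]
  norm_num

/-- Upper bound for `m(μ) = inf{τ(f,g) : (f,g) ∈ X_μ}`: there is a constant `C > 0`
independent of `a, c, μ` such that for all `a, c < 0` and `μ > 0`,
`m(μ) < -C μ^(5/3) / (|a|+|c|)^(1/3)`. -/
theorem stmt3 :
    ∃ C : ℝ, 0 < C ∧
      ∀ a c μ : ℝ, a < 0 → c < 0 → 0 < μ →
        sInf {t : ℝ | ∃ f f' g g' : ℝ → ℝ,
            (∀ x, HasDerivAt f (f' x) x) ∧
            (∀ x, HasDerivAt g (g' x) x) ∧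
            Integrable (fun x => (f x) ^ 2) ∧
            Integrable (fun x => (f' x) ^ 2) ∧
            Integrable (fun x => (g x) ^ 2) ∧
            Integrable (fun x => (g' x) ^ 2) ∧
            Integrable (fun x => (f x) ^ 2 * g x) ∧
            Integrable (fun x => f x * g x) ∧
            (∫ x, (f x) ^ 2) + (∫ x, (g x) ^ 2) = μ ∧
            t = -a * (∫ x, (f' x) ^ 2) - c * (∫ x, (g' x) ^ 2)
                + (∫ x, (f x) ^ 2 * g x) + 2 * (∫ x, f x * g x)}
          < -C * μ ^ ((5 : ℝ) / 3) / (|a| + |c|) ^ ((1 : ℝ) / 3) := by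
  refine ⟨1 / 50, by norm_num, fun a c μ ha hc hμ => ?_⟩
  change sInf (energyLevels a c μ) < _
  set K := |a| + |c|
  have hK : 0 < K := add_pos_of_pos_of_nonneg (abs_pos.2 ha.ne) (abs_nonneg c)
  set r := (μ ^ 2 / K) ^ ((1 : ℝ) / 3) with hr_def
  have hr : 0 < r := by positivity
  have hr3 : K * r ^ 3 = μ ^ 2 := by
    rw [hr_def, show (1 : ℝ) / 3 = ((3 : ℕ) : ℝ)⁻¹ by norm_num,
      rpow_inv_natCast_pow (div_nonneg (sq_nonneg μ) hK.le) three_ne_zero]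
    field_simp
  rw [mul_div_assoc, rpow_five_thirds_div_rpow_one_third hμ hK.le]
  have hrμ : 8 * π * K * (r / 5) ^ 4 / μ = 8 * π / 625 * (μ * r) := by
    rw [div_eq_iff hμ.ne']; linear_combination (8 * π * r / 625) * hr3
  calc sInf (energyLevels a c μ) < 8 * π * K * (r / 5) ^ 4 / μ - 2 / 5 * (r / 5) * μ :=
        sInf_energyLevels_lt ha hc.le hμ (by positivity)
    _ ≤ -(1 / 50) * (μ * r) := by
        rw [hrμ]
        nlinarith [mul_le_mul_of_nonneg_right pi_le_four (by positivity : 0 ≤ μ * r)]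
end

section
/- Let a, c < 0, μ > 0, and let (f,g) = (1/√2)(μ^{2/3} h_λ(μ^{1/3}·), -μ^{2/3} h_λ(μ^{1/3}·)) where h_λ(x) = λh(λ²x) for a fixed nonnegative h ∈ H¹(ℝ) with ‖h‖₂ = 1. Then ‖f‖₂² + ‖g‖₂² = μ and τ(f,g) ≤ μ^{5/3} λ (λ³(|a|+|c|)‖h'‖₂² - (1/(2√2))‖h‖₃³). -/
open MeasureTheory Real

/-! Both `f` and `f'` have the form `x ↦ A φ(k x)` with `k = λ² μ^(1/3)`, so each integral in
`τ` is `Aⁿ / k` times an integral of `h` or `h'`. Writing `μ = u³` turns all the constants into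
monomials in `u`, `λ` and `√2`. Since `g = -f`, the cubic term is `-∫ f³`, the coupling term is
`-2∫ f² = -μ ≤ 0`, and the kinetic terms make up only half of the claimed `λ⁴(|a|+|c|)` bound. -/
theorem integral_const_mul_comp_mul_pow {k : ℝ} (hk : 0 < k) (A : ℝ) (φ : ℝ → ℝ) (n : ℕ) :
    ∫ x, (A * φ (k * x)) ^ n = A ^ n / k * ∫ x, φ x ^ n := by
  simp_rw [mul_pow]
  rw [integral_const_mul, Measure.integral_comp_mul_left (fun y => φ y ^ n) k,
    abs_of_pos (inv_pos.2 hk), smul_eq_mul]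
  ring

theorem cube_rpow_div_three {u : ℝ} (hu : 0 ≤ u) (m : ℝ) : (u ^ 3) ^ (m / 3) = u ^ m := by
  rw [← rpow_natCast_mul hu]
  congr 1
  push_cast
  ring

theorem stmt5_general (a c μ l : ℝ) (ha : a < 0) (hc : c < 0) (hμ : 0 < μ) (hl : 0 < l)
    (h h' : ℝ → ℝ)
    (hnorm : (∫ x, (h x) ^ 2) = 1)
    (f g f' g' : ℝ → ℝ)
    (hf : f = fun x => (1 / Real.sqrt 2) * μ ^ ((2 : ℝ) / 3) * (l * h (l ^ 2 * (μ ^ ((1 : ℝ) / 3) * x))))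
    (hg : g = fun x => -f x)
    (hf' : f' = fun x => (1 / Real.sqrt 2) * μ ^ ((2 : ℝ) / 3) * μ ^ ((1 : ℝ) / 3) * (l ^ 3 * h' (l ^ 2 * (μ ^ ((1 : ℝ) / 3) * x))))
    (hg' : g' = fun x => -f' x) :
    (∫ x, (f x) ^ 2) + (∫ x, (g x) ^ 2) = μ ∧
    -a * (∫ x, (f' x) ^ 2) - c * (∫ x, (g' x) ^ 2)
        + (∫ x, (f x) ^ 2 * g x) + 2 * (∫ x, f x * g x) ≤
      μ ^ ((5 : ℝ) / 3) * l *
        (l ^ 3 * (|a| + |c|) * (∫ x, (h' x) ^ 2)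
          - (1 / (2 * Real.sqrt 2)) * (∫ x, (h x) ^ 3)) := by
  obtain ⟨u, hu, rfl⟩ : ∃ u, 0 < u ∧ μ = u ^ 3 :=
    ⟨μ ^ ((1 : ℝ) / 3), by positivity, by rw [← rpow_natCast, ← rpow_mul hμ.le]; norm_num⟩
  simp only [cube_rpow_div_three hu.le, rpow_one, rpow_ofNat] at hf hf' ⊢
  have hk : 0 < l ^ 2 * u := by positivity
  replace hf : f = fun x => u ^ 2 * l / √2 * h (l ^ 2 * u * x) := by
    rw [hf]; ext x; ring_nf
  replace hf' : f' = fun x => u ^ 3 * l ^ 3 / √2 * h' (l ^ 2 * u * x) := by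
    rw [hf']; ext x; ring_nf
  have hf2 : ∫ x, f x ^ 2 = u ^ 3 / 2 := by
    rw [hf, integral_const_mul_comp_mul_pow hk, hnorm]; field_simp; simp
  have hf3 : ∫ x, f x ^ 3 = u ^ 5 * l / (2 * √2) * ∫ x, h x ^ 3 := by
    rw [hf, integral_const_mul_comp_mul_pow hk]; field_simp; simp [mul_comm]
  have hf'2 : ∫ x, f' x ^ 2 = u ^ 5 * l ^ 4 / 2 * ∫ x, h' x ^ 2 := by
    rw [hf', integral_const_mul_comp_mul_pow hk]; field_simp; simp [mul_comm]
  simp only [hg, hg', neg_sq, mul_neg, ← pow_succ, ← sq, integral_neg]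
  rw [hf2, hf3, hf'2, abs_of_neg ha, abs_of_neg hc]
  have hkinetic : 0 ≤ -(a + c) * (u ^ 5 * l ^ 4 * ∫ x, h' x ^ 2) := by
    have : 0 ≤ ∫ x, h' x ^ 2 := integral_nonneg fun x => sq_nonneg _
    exact mul_nonneg (by linarith) (by positivity)
  constructor
  · ring
  · linear_combination hkinetic / 2 + hμ

/-- With `f = (1/√2) μ^(2/3) h_λ(μ^(1/3)·)` and `g = -f`, where `h_λ(x) = λ h(λ²x)` for a
nonnegative `h ∈ H¹(ℝ)` with `‖h‖₂ = 1`, one has `‖f‖₂² + ‖g‖₂² = μ` and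
`τ(f,g) ≤ μ^(5/3) λ (λ³(|a|+|c|)‖h'‖₂² - (1/(2√2))‖h‖₃³)`. -/
theorem stmt5 (a c μ l : ℝ) (ha : a < 0) (hc : c < 0) (hμ : 0 < μ) (hl : 0 < l)
    (h h' : ℝ → ℝ)
    (hpos : ∀ x, 0 ≤ h x)
    (hderiv : ∀ x, HasDerivAt h (h' x) x)
    (hh2 : Integrable (fun x => (h x) ^ 2))
    (hh'2 : Integrable (fun x => (h' x) ^ 2))
    (hh3 : Integrable (fun x => (h x) ^ 3))
    (hnorm : (∫ x, (h x) ^ 2) = 1)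
    (f g f' g' : ℝ → ℝ)
    (hf : f = fun x => (1 / Real.sqrt 2) * μ ^ ((2 : ℝ) / 3) * (l * h (l ^ 2 * (μ ^ ((1 : ℝ) / 3) * x))))
    (hg : g = fun x => -f x)
    (hf' : f' = fun x => (1 / Real.sqrt 2) * μ ^ ((2 : ℝ) / 3) * μ ^ ((1 : ℝ) / 3) * (l ^ 3 * h' (l ^ 2 * (μ ^ ((1 : ℝ) / 3) * x))))
    (hg' : g' = fun x => -f' x) :
    (∫ x, (f x) ^ 2) + (∫ x, (g x) ^ 2) = μ ∧
    -a * (∫ x, (f' x) ^ 2) - c * (∫ x, (g' x) ^ 2)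
        + (∫ x, (f x) ^ 2 * g x) + 2 * (∫ x, f x * g x) ≤
      μ ^ ((5 : ℝ) / 3) * l *
        (l ^ 3 * (|a| + |c|) * (∫ x, (h' x) ^ 2)
          - (1 / (2 * Real.sqrt 2)) * (∫ x, (h x) ^ 3)) :=
  stmt5_general a c μ l ha hc hμ hl h h' hnorm f g f' g' hf hg hf' hg'
end

section
/- If f, g ∈ H¹(ℝ), f* denotes the Schwarz (symmetric decreasing) rearrangement of |f| and g* that of |g|, then τ(f*, -g*) ≤ τ(f,g), where τ(f,g) = -a∫(f')² - c∫(g')² + ∫f²g + 2∫fg with a, c < 0. -/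
open MeasureTheory Real

/-- If `F = f*` and `G = g*` denote the Schwarz symmetric-decreasing rearrangements of
`|f|` and `|g|` (assumed here through their defining rearrangement inequalities), then
`τ(F, -G) ≤ τ(f, g)` where `τ(f,g) = -a∫(f')² - c∫(g')² + ∫f²g + 2∫fg`, `a, c < 0`. -/
theorem stmt6 (a c : ℝ) (ha : a < 0) (hc : c < 0)
    (f g F G f' g' F' G' : ℝ → ℝ)
    (hf : ∀ x, HasDerivAt f (f' x) x) (hg : ∀ x, HasDerivAt g (g' x) x)
    (hF : ∀ x, HasDerivAt F (F' x) x) (hG : ∀ x, HasDerivAt G (G' x) x)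
    -- integrability of all integrands appearing in τ
    (hif'2 : Integrable (fun x => (f' x) ^ 2)) (hig'2 : Integrable (fun x => (g' x) ^ 2))
    (hiF'2 : Integrable (fun x => (F' x) ^ 2)) (hiG'2 : Integrable (fun x => (G' x) ^ 2))
    (hifg : Integrable (fun x => f x * g x)) (hiFG : Integrable (fun x => F x * G x))
    (hif2g : Integrable (fun x => (f x) ^ 2 * g x))
    (hiF2G : Integrable (fun x => (F x) ^ 2 * G x))
    (hiafg : Integrable (fun x => |f x| * |g x|))
    (hiaf2g : Integrable (fun x => (f x) ^ 2 * |g x|))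
    -- properties of the Schwarz rearrangement
    (hFpos : ∀ x, 0 ≤ F x) (hGpos : ∀ x, 0 ≤ G x)
    (hgrad : (∫ x, (F' x) ^ 2) ≤ ∫ x, (f' x) ^ 2)
    (hgradG : (∫ x, (G' x) ^ 2) ≤ ∫ x, (g' x) ^ 2)
    (hriesz1 : (∫ x, |f x| * |g x|) ≤ ∫ x, F x * G x)
    (hriesz2 : (∫ x, (f x) ^ 2 * |g x|) ≤ ∫ x, (F x) ^ 2 * G x) :
    -a * (∫ x, (F' x) ^ 2) - c * (∫ x, (G' x) ^ 2)
        + (∫ x, (F x) ^ 2 * (-G x)) + 2 * (∫ x, F x * (-G x)) ≤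
      -a * (∫ x, (f' x) ^ 2) - c * (∫ x, (g' x) ^ 2)
        + (∫ x, (f x) ^ 2 * g x) + 2 * (∫ x, f x * g x) := by
  have e1 : (∫ x, (F x) ^ 2 * (-G x)) = -∫ x, (F x) ^ 2 * G x := by
    simp_rw [mul_neg]; exact integral_neg _
  have e2 : (∫ x, F x * (-G x)) = -∫ x, F x * G x := by
    simp_rw [mul_neg]; exact integral_neg _
  have h1 : -(∫ x, (F x) ^ 2 * G x) ≤ ∫ x, (f x) ^ 2 * g x := by
    have : -(∫ x, (f x) ^ 2 * |g x|) ≤ ∫ x, (f x) ^ 2 * g x := by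
      rw [← integral_neg]
      refine integral_mono hiaf2g.neg hif2g fun x => ?_
      simp only [neg_mul_eq_mul_neg]
      exact mul_le_mul_of_nonneg_left (neg_abs_le _) (sq_nonneg _)
    linarith
  have h2 : -(∫ x, F x * G x) ≤ ∫ x, f x * g x := by
    have : -(∫ x, |f x| * |g x|) ≤ ∫ x, f x * g x := by
      rw [← integral_neg]
      refine integral_mono hiafg.neg hifg fun x => ?_
      have := neg_abs_le (f x * g x)
      rwa [abs_mul] at this
    linarith
  have ha' : -a * (∫ x, (F' x) ^ 2) ≤ -a * (∫ x, (f' x) ^ 2) :=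
    mul_le_mul_of_nonneg_left hgrad (by linarith)
  have hc' : -c * (∫ x, (G' x) ^ 2) ≤ -c * (∫ x, (g' x) ^ 2) :=
    mul_le_mul_of_nonneg_left hgradG (by linarith)
  rw [e1, e2]
  linarith
end

section
/- Let a, c < 0 and let (f_n, g_n) be a sequence in H¹(ℝ)² with ‖f_n‖₂² + ‖g_n‖₂² = μ and τ(f_n,g_n) → m(μ). If sup_{y∈ℝ} ∫_{y-t}^{y+t}(f_n² + g_n²) → 0 as n → ∞ for every t > 0, then m(μ) ≥ -2μ. -/
/-!
Comparing `f(x)²` with its minimum over `[x - 1, x + 1]` and integrating `(f²)' = 2ff'` gives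
`‖f‖_∞² ≤ (1/2 + s) Q + ‖f'‖₂² / s` for every `s > 0`, where `Q` is the largest mass of `f² + g²`
on a window of length 2; vanishing means `Qₙ → 0`. Then `|∫ f²g| ≤ ‖f‖_∞ μ / 2` and
`2 ∫ fg ≥ -μ`. With `s = μ / (16 (-a))`, the AM-GM bound `‖f‖_∞ μ / 2 ≤ μ ‖f‖_∞² / 16 + μ` turns
the `‖f'‖₂²` contribution into exactly `-a ‖f'‖₂²`, which the gradient term of `τ` absorbs, so
`τ(fₙ, gₙ) ≥ -2μ - O(Qₙ)`.
-/

open MeasureTheory Real Filter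

lemma two_mul_abs_mul_le {s : ℝ} (hs : 0 < s) (u v : ℝ) :
    2 * |u * v| ≤ s * u ^ 2 + v ^ 2 / s := by
  have key : s * u ^ 2 + v ^ 2 / s - 2 * |u * v| = (s * |u| - |v|) ^ 2 / s := by
    rw [abs_mul]
    field_simp
    rw [← sq_abs u, ← sq_abs v]
    ring
  have : 0 ≤ (s * |u| - |v|) ^ 2 / s := by positivity
  linarith

lemma exists_mul_le_intervalIntegral {φ : ℝ → ℝ} {a b : ℝ} (hab : a ≤ b)
    (hφ : ContinuousOn φ (Set.Icc a b)) :
    ∃ z ∈ Set.Icc a b, (b - a) * φ z ≤ ∫ t in a..b, φ t := by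
  obtain ⟨z, hz, hmin⟩ := isCompact_Icc.exists_isMinOn (Set.nonempty_Icc.2 hab) hφ
  refine ⟨z, hz, ?_⟩
  have h := intervalIntegral.integral_mono_on (μ := volume) hab intervalIntegrable_const
    (hφ.intervalIntegrable_of_Icc hab) fun t ht => hmin ht
  rwa [intervalIntegral.integral_const, smul_eq_mul] at h

lemma sub_le_integral_of_abs_deriv_le {g g' φ : ℝ → ℝ} {a b x z : ℝ}
    (hg : ∀ t ∈ Set.Icc a b, HasDerivAt g (g' t) t) (hφ : IntegrableOn φ (Set.Icc a b))
    (hg'φ : ∀ t ∈ Set.Icc a b, |g' t| ≤ φ t) (hz : z ∈ Set.Icc a b) (hx : x ∈ Set.Icc a b) :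
    g x - g z ≤ ∫ t in a..b, φ t := by
  have hφ0 : 0 ≤ᵐ[volume.restrict (Set.Ioc a b)] φ :=
    (ae_restrict_mem measurableSet_Ioc).mono fun t ht =>
      (abs_nonneg _).trans (hg'φ t (Set.Ioc_subset_Icc_self ht))
  have hφab : IntervalIntegrable φ volume a b :=
    (intervalIntegrable_iff_integrableOn_Icc_of_le (hz.1.trans hz.2)).2 hφ
  have hsub : ∀ {u v}, u ∈ Set.Icc a b → v ∈ Set.Icc a b → Set.Icc u v ⊆ Set.Icc a b :=
    fun hu hv => Set.Icc_subset_Icc hu.1 hv.2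
  rcases le_total z x with hzx | hxz
  · calc g x - g z ≤ ∫ t in z..x, φ t :=
          intervalIntegral.sub_le_integral_of_hasDeriv_right_of_le hzx
            (fun t ht => (hg t (hsub hz hx ht)).continuousAt.continuousWithinAt)
            (fun t ht => (hg t (hsub hz hx (Set.Ioo_subset_Icc_self ht))).hasDerivWithinAt)
            (hφ.mono_set (hsub hz hx))
            fun t ht => (le_abs_self _).trans (hg'φ t (hsub hz hx (Set.Ioo_subset_Icc_self ht)))
      _ ≤ ∫ t in a..b, φ t := intervalIntegral.integral_mono_interval hz.1 hzx hx.2 hφ0 hφab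
  · calc g x - g z = (-g) z - (-g) x := by simp only [Pi.neg_apply]; ring
      _ ≤ ∫ t in x..z, φ t :=
          intervalIntegral.sub_le_integral_of_hasDeriv_right_of_le hxz
            (fun t ht => (hg t (hsub hx hz ht)).continuousAt.neg.continuousWithinAt)
            (fun t ht => (hg t (hsub hx hz (Set.Ioo_subset_Icc_self ht))).neg.hasDerivWithinAt)
            (hφ.mono_set (hsub hx hz))
            fun t ht => (neg_le_abs _).trans (hg'φ t (hsub hx hz (Set.Ioo_subset_Icc_self ht)))
      _ ≤ ∫ t in a..b, φ t := intervalIntegral.integral_mono_interval hx.1 hxz hz.2 hφ0 hφab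

lemma sq_le_of_hasDerivAt {f f' : ℝ → ℝ} {x r s : ℝ} (hr : 0 < r) (hs : 0 < s)
    (hf : ∀ t, HasDerivAt f (f' t) t)
    (hf' : IntegrableOn (fun t => f' t ^ 2) (Set.Icc (x - r) (x + r))) :
    f x ^ 2 ≤ (1 / (2 * r) + s) * (∫ t in x - r..x + r, f t ^ 2)
      + (∫ t in x - r..x + r, f' t ^ 2) / s := by
  have hxr : x - r ≤ x + r := by linarith
  have hf2 : ContinuousOn (fun t => f t ^ 2) (Set.Icc (x - r) (x + r)) :=
    (continuous_iff_continuousAt.2 fun t => (hf t).continuousAt).pow 2 |>.continuousOn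
  obtain ⟨z, hz, hfz⟩ := exists_mul_le_intervalIntegral hxr hf2
  have hf2i := hf2.integrableOn_Icc (μ := volume)
  have hφ : IntegrableOn (fun t => s * f t ^ 2 + f' t ^ 2 / s) (Set.Icc (x - r) (x + r)) :=
    (hf2i.const_mul s).add (hf'.div_const s)
  have hFTC := sub_le_integral_of_abs_deriv_le (g := fun t => f t ^ 2) (fun t _ => (hf t).pow 2)
    hφ (fun t _ => by simpa [mul_assoc] using two_mul_abs_mul_le hs (f t) (f' t)) hz
    (x := x) ⟨by linarith, by linarith⟩
  have hIcc {φ : ℝ → ℝ} :=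
    (intervalIntegrable_iff_integrableOn_Icc_of_le (f := φ) (μ := volume) hxr).2
  rw [intervalIntegral.integral_add (hIcc (hf2i.const_mul s)) (hIcc (hf'.div_const s)),
    intervalIntegral.integral_const_mul, intervalIntegral.integral_div] at hFTC
  have hz2 : f z ^ 2 ≤ 1 / (2 * r) * ∫ t in x - r..x + r, f t ^ 2 := by
    rw [div_mul_eq_mul_div, one_mul, le_div_iff₀ (by positivity)]
    linarith
  linarith

section
variable {α : Type*} [MeasurableSpace α] {μ : Measure α} {f g : α → ℝ}

lemma abs_integral_sq_mul_le {B : ℝ} (hB : ∀ x, |f x| ≤ B)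
    (hf : Integrable (fun x => f x ^ 2) μ) (hg : Integrable (fun x => g x ^ 2) μ) :
    |∫ x, f x ^ 2 * g x ∂μ| ≤ B / 2 * ((∫ x, f x ^ 2 ∂μ) + ∫ x, g x ^ 2 ∂μ) := by
  rw [← integral_add hf hg, ← integral_const_mul, ← Real.norm_eq_abs]
  refine norm_integral_le_of_norm_le ((hf.add hg).const_mul _) (ae_of_all _ fun x => ?_)
  have hfg : 2 * (|f x| * |g x|) ≤ f x ^ 2 + g x ^ 2 := by
    simpa [mul_assoc, sq_abs] using two_mul_le_add_sq |f x| |g x|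
  calc ‖f x ^ 2 * g x‖ = |f x| * (|f x| * |g x|) := by
        rw [Real.norm_eq_abs, abs_mul, abs_pow, sq, mul_assoc]
    _ ≤ B * ((f x ^ 2 + g x ^ 2) / 2) :=
        mul_le_mul (hB x) (by linarith) (by positivity) ((abs_nonneg _).trans (hB x))
    _ = B / 2 * (f x ^ 2 + g x ^ 2) := by ring

lemma neg_le_two_mul_integral_mul (hf : Integrable (fun x => f x ^ 2) μ)
    (hg : Integrable (fun x => g x ^ 2) μ) :
    -((∫ x, f x ^ 2 ∂μ) + ∫ x, g x ^ 2 ∂μ) ≤ 2 * ∫ x, f x * g x ∂μ := by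
  have h : ‖∫ x, 2 * (f x * g x) ∂μ‖ ≤ ∫ x, f x ^ 2 + g x ^ 2 ∂μ :=
    norm_integral_le_of_norm_le (hf.add hg) (ae_of_all _ fun x => by
      rw [Real.norm_eq_abs, abs_le]
      constructor <;> nlinarith [sq_nonneg (f x + g x), sq_nonneg (f x - g x)])
  rw [integral_const_mul, integral_add hf hg, Real.norm_eq_abs] at h
  linarith [neg_abs_le (2 * ∫ x, f x * g x ∂μ)]

end

/-- The paper's `τ(f, g)`, with the derivatives `f'`, `g'` passed as separate functions. -/
noncomputable def tau (a c : ℝ) (f g f' g' : ℝ → ℝ) : ℝ :=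
  -a * (∫ x, f' x ^ 2) - c * (∫ x, g' x ^ 2) + (∫ x, f x ^ 2 * g x) + 2 * ∫ x, f x * g x

lemma intervalIntegral_le_integral {h : ℝ → ℝ} {a b : ℝ} (hab : a ≤ b) (hh : Integrable h)
    (h0 : ∀ x, 0 ≤ h x) : ∫ x in a..b, h x ≤ ∫ x, h x := by
  rw [intervalIntegral.integral_of_le hab]
  exact setIntegral_le_integral hh (ae_of_all _ h0)

lemma neg_two_mul_le_tau_add {a c μ Q : ℝ} (ha : a < 0) (hc : c < 0) (hμ : 0 < μ)
    {f g f' g' : ℝ → ℝ} (hf : ∀ x, HasDerivAt f (f' x) x) (hf2 : Integrable (fun x => f x ^ 2))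
    (hf'2 : Integrable (fun x => f' x ^ 2)) (hg2 : Integrable (fun x => g x ^ 2))
    (hμ_eq : (∫ x, f x ^ 2) + (∫ x, g x ^ 2) = μ)
    (hQ : ∀ y, ∫ x in y - 1..y + 1, f x ^ 2 + g x ^ 2 ≤ Q) :
    -2 * μ ≤ tau a c f g f' g' + μ / 16 * (1 / 2 + μ / (16 * -a)) * Q := by
  unfold tau
  set s := μ / (16 * -a)
  have hs : 0 < s := div_pos hμ (by linarith)
  set P := ∫ x, f' x ^ 2
  set Φ := (1 / 2 + s) * Q + P / s
  have hsup : ∀ x, f x ^ 2 ≤ Φ := by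
    intro x
    have hwin_f : ∫ t in x - 1..x + 1, f t ^ 2 ≤ Q :=
      (intervalIntegral.integral_mono_on (by linarith) (hf2.intervalIntegrable)
        (hf2.add hg2).intervalIntegrable fun t _ => le_add_of_nonneg_right (sq_nonneg (g t))).trans
        (hQ x)
    have hwin_f' : ∫ t in x - 1..x + 1, f' t ^ 2 ≤ P :=
      intervalIntegral_le_integral (by linarith) hf'2 fun t => sq_nonneg _
    calc f x ^ 2
        ≤ (1 / (2 * 1) + s) * (∫ t in x - 1..x + 1, f t ^ 2)
          + (∫ t in x - 1..x + 1, f' t ^ 2) / s :=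
          sq_le_of_hasDerivAt one_pos hs hf hf'2.integrableOn
      _ ≤ Φ := by
          rw [mul_one]
          exact add_le_add (mul_le_mul_of_nonneg_left hwin_f (by positivity))
            (div_le_div_of_nonneg_right hwin_f' hs.le)
  have hΦ : 0 ≤ Φ := (sq_nonneg _).trans (hsup 0)
  have hcubic := abs_integral_sq_mul_le (fun x => Real.abs_le_sqrt (hsup x)) hf2 hg2
  have hcross := neg_le_two_mul_integral_mul hf2 hg2
  have hgrad : 0 ≤ -c * ∫ x, g' x ^ 2 :=
    mul_nonneg (by linarith) (integral_nonneg fun x => sq_nonneg _)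
  have hamgm : √Φ / 2 * μ ≤ μ / 16 * Φ + μ := by
    nlinarith [Real.sq_sqrt hΦ, mul_nonneg hμ.le (sq_nonneg (√Φ - 4))]
  have habsorb : μ / 16 * Φ = μ / 16 * (1 / 2 + s) * Q + -a * P := by
    simp only [Φ, s]
    field_simp
  rw [hμ_eq] at hcubic hcross
  linarith [neg_abs_le (∫ x, f x ^ 2 * g x)]

theorem stmt7_general (a c μ M : ℝ) (ha : a < 0) (hc : c < 0) (hμ : 0 < μ)
    (f g f' g' : ℕ → ℝ → ℝ)
    (hf : ∀ n x, HasDerivAt (f n) (f' n x) x)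
    (hif2 : ∀ n, Integrable (fun x => (f n x) ^ 2))
    (hif'2 : ∀ n, Integrable (fun x => (f' n x) ^ 2))
    (hig2 : ∀ n, Integrable (fun x => (g n x) ^ 2))
    (hconstraint : ∀ n, (∫ x, (f n x) ^ 2) + (∫ x, (g n x) ^ 2) = μ)
    (hmin : Tendsto (fun n =>
        -a * (∫ x, (f' n x) ^ 2) - c * (∫ x, (g' n x) ^ 2)
          + (∫ x, (f n x) ^ 2 * g n x) + 2 * (∫ x, f n x * g n x))
      atTop (nhds M))
    (hvanish : ∀ t : ℝ, 0 < t →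
      Tendsto (fun n => ⨆ y : ℝ, ∫ x in y - t..y + t, (f n x) ^ 2 + (g n x) ^ 2)
        atTop (nhds 0)) :
    M ≥ -2 * μ := by
  have hwindow : ∀ n y, ∫ x in y - 1..y + 1, (f n x) ^ 2 + (g n x) ^ 2
      ≤ ⨆ y : ℝ, ∫ x in y - 1..y + 1, (f n x) ^ 2 + (g n x) ^ 2 := by
    intro n y
    refine le_ciSup (f := fun y => ∫ x in y - 1..y + 1, (f n x) ^ 2 + (g n x) ^ 2) ⟨μ, ?_⟩ y
    rintro _ ⟨y, rfl⟩
    rw [← hconstraint n, ← integral_add (hif2 n) (hig2 n)]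
    exact intervalIntegral_le_integral (by linarith) ((hif2 n).add (hig2 n))
      fun x => add_nonneg (sq_nonneg _) (sq_nonneg _)
  have hbound := fun n => neg_two_mul_le_tau_add ha hc hμ (g' := g' n) (hf n) (hif2 n) (hif'2 n)
    (hig2 n) (hconstraint n) (hwindow n)
  have hlim := hmin.add ((hvanish 1 one_pos).const_mul (μ / 16 * (1 / 2 + μ / (16 * -a))))
  rw [mul_zero, add_zero] at hlim
  exact ge_of_tendsto' hlim hbound

/-- Ruling out vanishing: if `(f_n, g_n)` is a sequence in `X_μ` with
`τ(f_n,g_n) → m(μ)` and the concentration functions vanish, i.e.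
`sup_y ∫_{y-t}^{y+t} (f_n² + g_n²) → 0` for every `t > 0`, then `m(μ) ≥ -2μ`. -/
theorem stmt7 (a c μ M : ℝ) (ha : a < 0) (hc : c < 0) (hμ : 0 < μ)
    (f g f' g' : ℕ → ℝ → ℝ)
    (hf : ∀ n x, HasDerivAt (f n) (f' n x) x)
    (hg : ∀ n x, HasDerivAt (g n) (g' n x) x)
    (hif2 : ∀ n, Integrable (fun x => (f n x) ^ 2))
    (hif'2 : ∀ n, Integrable (fun x => (f' n x) ^ 2))
    (hig2 : ∀ n, Integrable (fun x => (g n x) ^ 2))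
    (hig'2 : ∀ n, Integrable (fun x => (g' n x) ^ 2))
    (hif2g : ∀ n, Integrable (fun x => (f n x) ^ 2 * g n x))
    (hifg : ∀ n, Integrable (fun x => f n x * g n x))
    (hconstraint : ∀ n, (∫ x, (f n x) ^ 2) + (∫ x, (g n x) ^ 2) = μ)
    (hmin : Tendsto (fun n =>
        -a * (∫ x, (f' n x) ^ 2) - c * (∫ x, (g' n x) ^ 2)
          + (∫ x, (f n x) ^ 2 * g n x) + 2 * (∫ x, f n x * g n x))
      atTop (nhds M))
    (hvanish : ∀ t : ℝ, 0 < t →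
      Tendsto (fun n => ⨆ y : ℝ, ∫ x in y - t..y + t, (f n x) ^ 2 + (g n x) ^ 2)
        atTop (nhds 0)) :
    M ≥ -2 * μ :=
  stmt7_general a c μ M ha hc hμ f g f' g' hf hif2 hif'2 hig2 hconstraint hmin hvanish
end

section
/- Let a, c < 0, |ω| < 1, and let (φ,ψ) ∈ H¹(ℝ)² be a smooth solution of aφ'' + φ - ωψ + φψ = 0, cψ'' + ψ - ωφ + (1/2)φ² = 0 decaying at infinity. Then there exist α > 0 such that e^{α|x|}φ(x) and e^{α|x|}ψ(x) are bounded on ℝ (exponential decay). -/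
open Filter Real

open Set

lemma monoHelper {f f' : ℝ → ℝ} {t : ℝ} (hf : ∀ x, HasDerivAt f (f' x) x)
    (h : ∀ x, t ≤ x → 0 ≤ f' x) : ∀ x, t ≤ x → f t ≤ f x := by
  intro x hx
  have hc : Continuous f := Differentiable.continuous fun y => (hf y).differentiableAt
  have := monotoneOn_of_deriv_nonneg (convex_Ici t) hc.continuousOn
    (fun y hy => (hf y).differentiableAt.differentiableWithinAt)
    (fun y hy => by
      rw [(hf y).deriv]
      exact h y (le_of_lt (by simpa [interior_Ici] using hy)))
  exact this (self_mem_Ici) hx hx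

lemma decay_aux {β R : ℝ} (hβ : 0 < β) (u u' u'' : ℝ → ℝ)
    (hu : ∀ x, HasDerivAt u (u' x) x) (hu' : ∀ x, HasDerivAt u' (u'' x) x)
    (hnn : ∀ x, 0 ≤ u x) (hlim : Tendsto u atTop (nhds 0))
    (hineq : ∀ x, R ≤ x → β ^ 2 * u x ≤ u'' x) :
    ∀ x, R ≤ x → u x ≤ u R * Real.exp (β * (R - x)) := by
  have hexp1 : ∀ x : ℝ, HasDerivAt (fun x : ℝ => Real.exp (β * x)) (Real.exp (β * x) * β) x := by
    intro x
    have : HasDerivAt (fun x : ℝ => β * x) β x := by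
      simpa using (hasDerivAt_id x).const_mul β
    exact this.exp
  have hq2 : ∀ x : ℝ, HasDerivAt (fun x => u' x + β * u x) (u'' x + β * u' x) x := by
    intro x
    exact (hu' x).add ((hu x).const_mul β)
  -- Step 1 : u' + βu ≤ 0 on [R,∞)
  have hq : ∀ x, R ≤ x → u' x + β * u x ≤ 0 := by
    by_contra hcon
    push_neg at hcon
    obtain ⟨x1, hx1, hq1⟩ := hcon
    set K : ℝ := Real.exp (-(β * x1)) * (u' x1 + β * u x1) with hKdef
    have hK : 0 < K := mul_pos (Real.exp_pos _) hq1
    set G : ℝ → ℝ := fun x => Real.exp (-(β * x)) * (u' x + β * u x) with hGdef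
    have hexpneg : ∀ x : ℝ, HasDerivAt (fun x : ℝ => Real.exp (-(β * x)))
        (Real.exp (-(β * x)) * (-β)) x := by
      intro x
      have : HasDerivAt (fun x : ℝ => -(β * x)) (-β) x := by
        have h := ((hasDerivAt_id x).const_mul β).neg; simp only [mul_one] at h; exact h
      exact this.exp
    have hG : ∀ x, HasDerivAt G
        (Real.exp (-(β * x)) * (-β) * (u' x + β * u x)
          + Real.exp (-(β * x)) * (u'' x + β * u' x)) x :=
      fun x => (hexpneg x).mul (hq2 x)
    have hGmono : ∀ x, x1 ≤ x → G x1 ≤ G x := by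
      apply monoHelper hG
      intro x hx
      have h1 := hineq x (le_trans hx1 hx)
      have h2 := Real.exp_pos (-(β * x))
      nlinarith [h2]
    have hqlow : ∀ x, x1 ≤ x → K * Real.exp (β * x) ≤ u' x + β * u x := by
      intro x hx
      have h1 := hGmono x hx
      have h2 : G x1 = K := rfl
      have h3 : G x = Real.exp (-(β * x)) * (u' x + β * u x) := rfl
      rw [h2, h3] at h1
      have h4 : (0:ℝ) < Real.exp (-(β * x)) := Real.exp_pos _
      have h5 : Real.exp (-(β * x)) * Real.exp (β * x) = 1 := by
        rw [← Real.exp_add]; simp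
      nlinarith
    set H : ℝ → ℝ := fun x => Real.exp (β * x) * u x - K / (2 * β) * Real.exp (2 * β * x)
      with hHdef
    have hexp2 : ∀ x : ℝ, HasDerivAt (fun x : ℝ => Real.exp (2 * β * x))
        (Real.exp (2 * β * x) * (2 * β)) x := by
      intro x
      have : HasDerivAt (fun x : ℝ => 2 * β * x) (2 * β) x := by
        simpa using (hasDerivAt_id x).const_mul (2 * β)
      exact this.exp
    have hH : ∀ x, HasDerivAt H
        (Real.exp (β * x) * β * u x + Real.exp (β * x) * u' x
          - K / (2 * β) * (Real.exp (2 * β * x) * (2 * β))) x :=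
      fun x => ((hexp1 x).mul (hu x)).sub ((hexp2 x).const_mul (K / (2 * β)))
    have hHmono : ∀ x, x1 ≤ x → H x1 ≤ H x := by
      apply monoHelper hH
      intro x hx
      have h1 := hqlow x hx
      have h2 : Real.exp (2 * β * x) = Real.exp (β * x) * Real.exp (β * x) := by
        rw [← Real.exp_add]; ring_nf
      have h3 := Real.exp_pos (β * x)
      have h4 : K / (2 * β) * (Real.exp (2 * β * x) * (2 * β)) =
          K * Real.exp (2 * β * x) := by
        field_simp
      rw [h4, h2]
      nlinarith
    -- lower bound forcing blow-up
    have hlow : ∀ x, x1 ≤ x →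
        K / (2 * β) * Real.exp (β * x) - K / (2 * β) * Real.exp (β * x1) ≤ u x := by
      intro x hx
      have h1 := hHmono x hx
      have h2 : H x1 = Real.exp (β * x1) * u x1 - K / (2 * β) * Real.exp (2 * β * x1) := rfl
      have h3 : H x = Real.exp (β * x) * u x - K / (2 * β) * Real.exp (2 * β * x) := rfl
      rw [h2, h3] at h1
      have e2a : Real.exp (2 * β * x1) = Real.exp (β * x1) * Real.exp (β * x1) := by
        rw [← Real.exp_add]; ring_nf
      have e2b : Real.exp (2 * β * x) = Real.exp (β * x) * Real.exp (β * x) := by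
        rw [← Real.exp_add]; ring_nf
      rw [e2a, e2b] at h1
      have hE1 : (0:ℝ) < Real.exp (β * x1) := Real.exp_pos _
      have hE : (0:ℝ) < Real.exp (β * x) := Real.exp_pos _
      have hle : Real.exp (β * x1) ≤ Real.exp (β * x) :=
        Real.exp_le_exp.mpr (by nlinarith)
      have hc : (0:ℝ) < K / (2 * β) := by positivity
      nlinarith [mul_nonneg (hnn x1) hE1.le,
        mul_nonneg (mul_nonneg hc.le (sub_nonneg.mpr hle)) hE1.le]
    -- contradiction with u → 0
    have h1 : ∀ᶠ x in atTop, u x < K / (2 * β) := by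
      have : (0:ℝ) < K / (2 * β) := by positivity
      exact hlim.eventually (gt_mem_nhds this)
    have h2 : Tendsto (fun x : ℝ => K / (2 * β) * Real.exp (β * x)
        - K / (2 * β) * Real.exp (β * x1)) atTop atTop := by
      apply tendsto_atTop_add_const_right
      apply Tendsto.const_mul_atTop (by positivity : (0:ℝ) < K / (2 * β))
      exact Real.tendsto_exp_atTop.comp (tendsto_id.const_mul_atTop hβ)
    have h3 := h2.eventually_ge_atTop (K / (2 * β))
    obtain ⟨x, ⟨hxa, hxb⟩, hxc⟩ := ((h1.and h3).and (eventually_ge_atTop x1)).exists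
    have := hlow x hxc
    linarith
  -- Step 2 : e^{βx} u is nonincreasing on [R,∞)
  have hFanti : ∀ x, R ≤ x → Real.exp (β * x) * u x ≤ Real.exp (β * R) * u R := by
    have hF : ∀ x, HasDerivAt (fun x => -(Real.exp (β * x) * u x))
        (-(Real.exp (β * x) * β * u x + Real.exp (β * x) * u' x)) x :=
      fun x => ((hexp1 x).mul (hu x)).neg
    have := monoHelper hF (t := R) (fun x hx => by
      have h1 := hq x hx
      have h2 := Real.exp_pos (β * x)
      nlinarith)
    intro x hx
    have := this x hx
    linarith
  intro x hx
  have h1 := hFanti x hx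
  have h2 : Real.exp (β * (R - x)) = Real.exp (β * R) * Real.exp (-(β * x)) := by
    rw [← Real.exp_add]; ring_nf
  have h4i : Real.exp (β * x) * Real.exp (-(β * x)) = 1 := by
    rw [← Real.exp_add]; simp
  calc u x = Real.exp (β * x) * u x * Real.exp (-(β * x)) := by
        rw [mul_comm (Real.exp (β * x)) (u x), mul_assoc, h4i, mul_one]
    _ ≤ Real.exp (β * R) * u R * Real.exp (-(β * x)) :=
        mul_le_mul_of_nonneg_right h1 (Real.exp_pos _).le
    _ = u R * Real.exp (β * (R - x)) := by rw [h2]; ring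

lemma quad_aux {ε ω p q dp dq AA CC : ℝ} (hε : 0 < ε) (hA : 0 < AA) (hC : 0 < CC)
    (hωr : ω ≤ 1 - ε) (hωl : -(1 - ε) ≤ ω) (hψl : -(ε / 3) ≤ q) (hψr : q ≤ ε / 3) :
    ε * (p ^ 2 + q ^ 2) ≤ 2 * AA * (dp * dp) + 2 * CC * (dq * dq)
      + 2 * p * (p - ω * q + p * q) + 2 * q * (q - ω * p + 1 / 2 * p ^ 2) := by
  nlinarith [mul_nonneg hA.le (mul_self_nonneg dp), mul_nonneg hC.le (mul_self_nonneg dq),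
    mul_nonneg (by linarith : (0:ℝ) ≤ (1 - ε) - ω) (sq_nonneg (p + q)),
    mul_nonneg (by linarith : (0:ℝ) ≤ (1 - ε) + ω) (sq_nonneg (p - q)),
    mul_nonneg (sq_nonneg p) (by linarith : (0:ℝ) ≤ ε / 3 + q),
    mul_nonneg hε.le (sq_nonneg q), mul_nonneg hε.le (sq_nonneg p)]

set_option maxHeartbeats 1000000 in
set_option maxHeartbeats 1000000 in
/-- Exponential decay of traveling-wave profiles: if `a, c < 0`, `|ω| < 1` and
`(φ,ψ) ∈ H¹(ℝ)²` is a smooth solution of the stationary system decaying at infinity,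
then there exists `α > 0` such that `e^{α|x|}φ(x)` and `e^{α|x|}ψ(x)` are bounded. -/
theorem stmt16 (a c ω : ℝ) (ha : a < 0) (hc : c < 0) (hω : |ω| < 1)
    (φ ψ φ' ψ' φ'' ψ'' : ℝ → ℝ)
    (hsmoothφ : ContDiff ℝ (⊤ : ℕ∞) φ) (hsmoothψ : ContDiff ℝ (⊤ : ℕ∞) ψ)
    (hφ : ∀ x, HasDerivAt φ (φ' x) x) (hψ : ∀ x, HasDerivAt ψ (ψ' x) x)
    (hφ' : ∀ x, HasDerivAt φ' (φ'' x) x) (hψ' : ∀ x, HasDerivAt ψ' (ψ'' x) x)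
    (hφ2 : MeasureTheory.Integrable (fun x => (φ x) ^ 2))
    (hψ2 : MeasureTheory.Integrable (fun x => (ψ x) ^ 2))
    (hφ'2 : MeasureTheory.Integrable (fun x => (φ' x) ^ 2))
    (hψ'2 : MeasureTheory.Integrable (fun x => (ψ' x) ^ 2))
    (hdecφ : Tendsto φ (cocompact ℝ) (nhds 0))
    (hdecψ : Tendsto ψ (cocompact ℝ) (nhds 0))
    (heq1 : ∀ x, a * φ'' x + φ x - ω * ψ x + φ x * ψ x = 0)
    (heq2 : ∀ x, c * ψ'' x + ψ x - ω * φ x + (1 / 2) * (φ x) ^ 2 = 0) :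
    ∃ α : ℝ, 0 < α ∧ ∃ M : ℝ,
      ∀ x : ℝ, |Real.exp (α * |x|) * φ x| ≤ M ∧ |Real.exp (α * |x|) * ψ x| ≤ M := by
  have hA : (0:ℝ) < -a := by linarith
  have hC : (0:ℝ) < -c := by linarith
  set A : ℝ := -a with hAdef
  set C : ℝ := -c with hCdef
  set ε : ℝ := 1 - |ω| with hεdef
  have hε : 0 < ε := by simp only [hεdef]; linarith
  set m : ℝ := max A C with hmdef
  have hmpos : 0 < m := lt_of_lt_of_le hA (le_max_left _ _)
  set δ : ℝ := ε / m with hδdef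
  have hδ : 0 < δ := div_pos hε hmpos
  set β : ℝ := Real.sqrt δ with hβdef
  have hβ : 0 < β := Real.sqrt_pos.mpr hδ
  have hβ2 : β ^ 2 = δ := Real.sq_sqrt hδ.le
  -- the energy u and its derivatives
  set u : ℝ → ℝ := fun x => A * φ x ^ 2 + C * ψ x ^ 2 with hudef
  set u1 : ℝ → ℝ := fun x => 2 * A * (φ x * φ' x) + 2 * C * (ψ x * ψ' x) with hu1def
  set u2 : ℝ → ℝ := fun x => 2 * A * (φ' x * φ' x + φ x * φ'' x)
    + 2 * C * (ψ' x * ψ' x + ψ x * ψ'' x) with hu2def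
  have hu : ∀ x, HasDerivAt u (u1 x) x := by
    intro x
    have h := (((hφ x).pow 2).const_mul A).add (((hψ x).pow 2).const_mul C)
    refine h.congr_deriv ?_
    simp only [hu1def]
    push_cast
    ring
  have hu1 : ∀ x, HasDerivAt u1 (u2 x) x := fun x =>
    (((hφ x).mul (hφ' x)).const_mul (2 * A)).add (((hψ x).mul (hψ' x)).const_mul (2 * C))
  have hnn : ∀ x, 0 ≤ u x := by
    intro x
    have := sq_nonneg (φ x); have := sq_nonneg (ψ x)
    simp only [hudef]
    nlinarith
  -- limits at ±∞
  rw [cocompact_eq_atBot_atTop] at hdecφ hdecψ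
  obtain ⟨hφbot, hφtop⟩ := tendsto_sup.mp hdecφ
  obtain ⟨hψbot, hψtop⟩ := tendsto_sup.mp hdecψ
  have hlimtop : Tendsto u atTop (nhds 0) := by
    have h := ((hφtop.pow 2).const_mul A).add ((hψtop.pow 2).const_mul C)
    simpa using h
  have hlimbot : Tendsto u atBot (nhds 0) := by
    have h := ((hφbot.pow 2).const_mul A).add ((hψbot.pow 2).const_mul C)
    simpa using h
  -- choice of R : |ψ| ≤ ε/3 outside [-R, R]
  have h3 : (0:ℝ) < ε / 3 := by linarith
  obtain ⟨R1, hR1⟩ : ∃ R1 : ℝ, ∀ x ≥ R1, |ψ x| < ε / 3 := by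
    have := hψtop.eventually (Metric.ball_mem_nhds (0:ℝ) h3)
    rw [eventually_atTop] at this
    obtain ⟨R1, hR1⟩ := this
    exact ⟨R1, fun x hx => by simpa [Real.dist_eq] using hR1 x hx⟩
  obtain ⟨R2, hR2⟩ : ∃ R2 : ℝ, ∀ x ≤ R2, |ψ x| < ε / 3 := by
    have := hψbot.eventually (Metric.ball_mem_nhds (0:ℝ) h3)
    rw [eventually_atBot] at this
    obtain ⟨R2, hR2⟩ := this
    exact ⟨R2, fun x hx => by simpa [Real.dist_eq] using hR2 x hx⟩
  set R : ℝ := max (max R1 (-R2)) 0 with hRdef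
  have hR0 : (0:ℝ) ≤ R := le_max_right _ _
  have hsmall : ∀ x : ℝ, R ≤ |x| → |ψ x| ≤ ε / 3 := by
    intro x hx
    rcases le_total 0 x with h | h
    · rw [abs_of_nonneg h] at hx
      exact (hR1 x (le_trans (le_trans (le_max_left _ _) (le_max_left _ _)) hx)).le
    · rw [abs_of_nonpos h] at hx
      have : -R2 ≤ -x := le_trans (le_trans (le_max_right _ _) (le_max_left _ _)) hx
      exact (hR2 x (by linarith)).le
  -- key differential inequality
  have key : ∀ x : ℝ, R ≤ |x| → β ^ 2 * u x ≤ u2 x := by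
    intro x hx
    have hAφ : A * φ'' x = φ x - ω * ψ x + φ x * ψ x := by
      have := heq1 x; simp only [hAdef]; linarith
    have hCψ : C * ψ'' x = ψ x - ω * φ x + (1 / 2) * φ x ^ 2 := by
      have := heq2 x; simp only [hCdef]; linarith
    have hψs := hsmall x hx
    obtain ⟨hψl, hψr⟩ := abs_le.mp hψs
    have habs : |ω| = 1 - ε := by simp only [hεdef]; ring
    have hωr : ω ≤ 1 - ε := habs ▸ le_abs_self ω
    have hωl : -(1 - ε) ≤ ω := habs ▸ neg_abs_le ω
    rw [hβ2]
    have hu_le : u x ≤ m * (φ x ^ 2 + ψ x ^ 2) := by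
      have h1 : A ≤ m := le_max_left _ _
      have h2 : C ≤ m := le_max_right _ _
      simp only [hudef]
      nlinarith [sq_nonneg (φ x), sq_nonneg (ψ x)]
    have hδm : δ * m = ε := div_mul_cancel₀ _ hmpos.ne'
    have step1 : δ * u x ≤ ε * (φ x ^ 2 + ψ x ^ 2) := by
      calc δ * u x ≤ δ * (m * (φ x ^ 2 + ψ x ^ 2)) :=
            mul_le_mul_of_nonneg_left hu_le hδ.le
        _ = ε * (φ x ^ 2 + ψ x ^ 2) := by rw [← mul_assoc, hδm]
    have step2 : ε * (φ x ^ 2 + ψ x ^ 2) ≤ u2 x := by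
      have e1 : u2 x = 2 * A * (φ' x * φ' x) + 2 * C * (ψ' x * ψ' x)
          + 2 * φ x * (A * φ'' x) + 2 * ψ x * (C * ψ'' x) := by
        simp only [hu2def]; ring
      rw [e1, hAφ, hCψ]
      exact quad_aux hε hA hC hωr hωl hψl hψr
    linarith
  -- decay on the right
  have hright := decay_aux (R := R) hβ u u1 u2 hu hu1 hnn hlimtop (fun x hx => key x (by
    rw [abs_of_nonneg (le_trans hR0 hx)]; exact hx))
  -- decay on the left
  have hleft : ∀ x, R ≤ x → u (-x) ≤ u (-R) * Real.exp (β * (R - x)) := by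
    have hv : ∀ x, HasDerivAt (fun x => u (-x)) (-u1 (-x)) x := by
      intro x
      have h := (hu (-x)).comp x (hasDerivAt_neg x); simp only [mul_neg, mul_one, neg_neg] at h; exact h
    have hv1 : ∀ x, HasDerivAt (fun x => -u1 (-x)) (u2 (-x)) x := by
      intro x
      have h := ((hu1 (-x)).comp x (hasDerivAt_neg x)).neg; simp only [mul_neg, mul_one, neg_neg] at h; exact h
    have hvlim : Tendsto (fun x => u (-x)) atTop (nhds 0) :=
      hlimbot.comp tendsto_neg_atTop_atBot
    have hvineq : ∀ x, R ≤ x → β ^ 2 * u (-x) ≤ u2 (-x) := by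
      intro x hx
      exact key (-x) (by rw [abs_neg, abs_of_nonneg (le_trans hR0 hx)]; exact hx)
    exact decay_aux (R := R) hβ (fun x => u (-x)) (fun x => -u1 (-x)) (fun x => u2 (-x))
      hv hv1 (fun x => hnn (-x)) hvlim hvineq
  -- bound on the compact part
  have hucont : Continuous u := Differentiable.continuous fun x => (hu x).differentiableAt
  obtain ⟨z, hz, hzmax⟩ := isCompact_Icc.exists_isMaxOn
    (nonempty_Icc.mpr (by linarith : -R ≤ R)) hucont.continuousOn
  set M0 : ℝ := max (u R * Real.exp (β * R))
    (max (u (-R) * Real.exp (β * R)) (u z * Real.exp (β * R))) with hM0def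
  have hbound : ∀ x : ℝ, Real.exp (β * |x|) * u x ≤ M0 := by
    intro x
    rcases le_total R x with hxR | hxR
    · have h1 := hright x hxR
      have h2 : Real.exp (β * x) * (u R * Real.exp (β * (R - x))) = u R * Real.exp (β * R) := by
        have harg : β * x + β * (R - x) = β * R := by ring
        rw [mul_comm (u R) _, ← mul_assoc, ← Real.exp_add, harg, mul_comm]
      have h3 : Real.exp (β * |x|) * u x ≤ u R * Real.exp (β * R) := by
        rw [abs_of_nonneg (le_trans hR0 hxR), ← h2]
        exact mul_le_mul_of_nonneg_left h1 (Real.exp_pos _).le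
      exact h3.trans (le_max_left _ _)
    · rcases le_total x (-R) with hxL | hxL
      · have hy : R ≤ -x := by linarith
        have h1 := hleft (-x) hy
        rw [neg_neg] at h1
        have h2 : Real.exp (β * (-x)) * (u (-R) * Real.exp (β * (R - -x)))
            = u (-R) * Real.exp (β * R) := by
          have harg : β * (-x) + β * (R - -x) = β * R := by ring
          rw [mul_comm (u (-R)) _, ← mul_assoc, ← Real.exp_add, harg, mul_comm]
        have h3 : Real.exp (β * |x|) * u x ≤ u (-R) * Real.exp (β * R) := by
          rw [abs_of_nonpos (by linarith : x ≤ 0), ← h2]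
          exact mul_le_mul_of_nonneg_left h1 (Real.exp_pos _).le
        exact h3.trans ((le_max_left _ _).trans (le_max_right _ _))
      · have hmem : x ∈ Icc (-R) R := ⟨hxL, hxR⟩
        have h1 : u x ≤ u z := hzmax hmem
        have h2 : Real.exp (β * |x|) ≤ Real.exp (β * R) := by
          apply Real.exp_le_exp.mpr
          have : |x| ≤ R := abs_le.mpr ⟨hxL, hxR⟩
          nlinarith
        have h3 : Real.exp (β * |x|) * u x ≤ Real.exp (β * R) * u z :=
          mul_le_mul h2 h1 (hnn x) (Real.exp_pos _).le
        refine h3.trans ?_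
        rw [mul_comm]
        exact (le_max_right _ _).trans (le_max_right _ _)
  -- conclusion
  refine ⟨β / 2, by positivity, max (Real.sqrt (M0 / A)) (Real.sqrt (M0 / C)), fun x => ?_⟩
  have hE : Real.exp (β / 2 * |x|) ^ 2 = Real.exp (β * |x|) := by
    rw [sq, ← Real.exp_add]; ring_nf
  have hb := hbound x
  constructor
  · have h1 : (Real.exp (β / 2 * |x|) * φ x) ^ 2 ≤ M0 / A := by
      have h2 : A * φ x ^ 2 ≤ u x := by
        simp only [hudef]; nlinarith [sq_nonneg (ψ x)]
      rw [mul_pow, hE, le_div_iff₀ hA]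
      nlinarith [mul_le_mul_of_nonneg_left h2 (Real.exp_pos (β * |x|)).le]
    have h4 : |Real.exp (β / 2 * |x|) * φ x| ≤ Real.sqrt (M0 / A) := by
      rw [← Real.sqrt_sq_eq_abs]; exact Real.sqrt_le_sqrt h1
    exact h4.trans (le_max_left _ _)
  · have h1 : (Real.exp (β / 2 * |x|) * ψ x) ^ 2 ≤ M0 / C := by
      have h2 : C * ψ x ^ 2 ≤ u x := by
        simp only [hudef]; nlinarith [sq_nonneg (φ x)]
      rw [mul_pow, hE, le_div_iff₀ hC]
      nlinarith [mul_le_mul_of_nonneg_left h2 (Real.exp_pos (β * |x|)).le]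
    have h4 : |Real.exp (β / 2 * |x|) * ψ x| ≤ Real.sqrt (M0 / C) := by
      rw [← Real.sqrt_sq_eq_abs]; exact Real.sqrt_le_sqrt h1
    exact h4.trans (le_max_right _ _)
end
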